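/- arXiv:2211.02584 — 2 statements merged into one kernel-verified Lean document; each statement's English description precedes it below -/
import Mathlib

section
/- (Lemma 1) Let $d \ge 2$, let $a, b$ be unit vectors in $\mathbb{C}^d$ with $\rho = |a\rangle\langle a| \ne \sigma = |b\rangle\langle b|$, and set $\lambda = \sqrt{1 - |\langle a, b\rangle|^2}$. Fix a real $p \ge 1$. Then for every Hermitian matrix $D$ with $\|D\|_p \le 1$ one has $\mathrm{Tr}(D(\rho - \sigma)) \le 2^{1 - 1/p}\lambda$, and the Hermitian matrix $D^* = \frac{2^{-1/p}}{\lambda}(\rho - \sigma)$ satisfies $\|D^*\|_p \le 1$ and $\mathrm{Tr}(D^*(\rho - \sigma)) = 2^{1 - 1/p}\lambda$; i.e., $D^*$ achieves the maximum of $\mathrm{Tr}(D(\rho - \sigma))$ over Hermitian $D$ with $\|D\|_p \le 1$. -/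
open Matrix ComplexOrder

/-- The pure state (rank-one projector) `|a⟩⟨a|` associated to a vector `a`. -/
noncomputable def outerProd {ι : Type*} (a : ι → ℂ) : Matrix ι ι ℂ :=
  Matrix.vecMulVec a (star a)

/-- Schatten `p`-norm of a Hermitian matrix: `(∑ᵢ |λᵢ|ᵖ)^(1/p)`, where `λᵢ` are the
eigenvalues counted with multiplicity. -/
noncomputable def schattenNorm {d : ℕ} (p : ℝ) {A : Matrix (Fin d) (Fin d) ℂ}
    (hA : A.IsHermitian) : ℝ :=
  (∑ i, |hA.eigenvalues i| ^ p) ^ (1 / p)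

section Aux

lemma vmv_mul {d : ℕ} (u v w x : Fin d → ℂ) :
    vecMulVec u v * vecMulVec w x = (v ⬝ᵥ w) • vecMulVec u x := by
  ext i j
  simp [vecMulVec_apply, mul_apply, dotProduct, Finset.sum_mul, Finset.mul_sum]
  congr 1; ext k; ring

lemma trace_vmv {d : ℕ} (u v : Fin d → ℂ) : (vecMulVec u v).trace = v ⬝ᵥ u := by
  simp [Matrix.trace, vecMulVec_apply, dotProduct, Matrix.diag, mul_comm]

lemma herm_trace_eq {d : ℕ} {A : Matrix (Fin d) (Fin d) ℂ} (hA : A.IsHermitian) :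
    A.trace = ∑ i, (hA.eigenvalues i : ℂ) := by
  conv_lhs => rw [hA.spectral_theorem]; simp only [Unitary.conjStarAlgAut_apply, Unitary.coe_star]
  rw [Matrix.trace_mul_cycle]
  simp [Matrix.mem_unitaryGroup_iff'.mp (hA.eigenvectorUnitary).2, Matrix.trace_diagonal]

lemma herm_trace_sq_eq {d : ℕ} {A : Matrix (Fin d) (Fin d) ℂ} (hA : A.IsHermitian) :
    (A * A).trace = ∑ i, (hA.eigenvalues i : ℂ)^2 := by
  conv_lhs => rw [hA.spectral_theorem]; simp only [Unitary.conjStarAlgAut_apply, Unitary.coe_star]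
  rw [show ∀ U D V : Matrix (Fin d) (Fin d) ℂ, U*D*V*(U*D*V) = U*(D*(V*U)*D)*V by
    intros; noncomm_ring]
  rw [Matrix.mem_unitaryGroup_iff'.mp (hA.eigenvectorUnitary).2]
  rw [Matrix.trace_mul_cycle]
  simp [Matrix.mem_unitaryGroup_iff'.mp (hA.eigenvectorUnitary).2, Matrix.trace_diagonal, sq,
    ← Matrix.mul_assoc]

lemma eig_cubic {d : ℕ} {A : Matrix (Fin d) (Fin d) ℂ} (hA : A.IsHermitian) (c : ℝ)
    (h3 : A * A * A = (c : ℂ) • A) (i : Fin d) :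
    hA.eigenvalues i ^ 3 = c * hA.eigenvalues i := by
  have hv := hA.mulVec_eigenvectorBasis i
  have hvne : (⇑(hA.eigenvectorBasis i) : Fin d → ℂ) ≠ 0 := by
    have h := (hA.eigenvectorBasis).orthonormal.1 i
    intro h0
    rw [show (hA.eigenvectorBasis i : EuclideanSpace ℂ (Fin d)) = 0 from
      by ext j; exact congrFun h0 j] at h
    simp at h
  set μ := hA.eigenvalues i with hμ
  revert hv hvne
  generalize (⇑(hA.eigenvectorBasis i) : Fin d → ℂ) = v
  intro hvz hmul
  have hv' : A *ᵥ v = (μ:ℂ) • v := by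
    rw [hmul]; ext j; simp [Complex.real_smul]
  have e1 : (A*A*A) *ᵥ v = A *ᵥ (A *ᵥ (A *ᵥ v)) := by
    rw [Matrix.mulVec_mulVec, Matrix.mulVec_mulVec]
  have h1 : (A*A*A) *ᵥ v = ((μ:ℂ)^3) • v := by
    rw [e1]
    simp only [hv', Matrix.mulVec_smul, smul_smul]
    congr 1; ring
  have h2 : (A*A*A) *ᵥ v = ((c:ℂ)*(μ:ℂ)) • v := by
    rw [h3, Matrix.smul_mulVec, hv', smul_smul]
  have h5 : (((μ:ℂ)^3 - (c:ℂ)*μ)) • v = 0 := by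
    rw [sub_smul, ← h1, ← h2, sub_self]
  rcases smul_eq_zero.mp h5 with h | h
  · have : ((μ^3 : ℝ) : ℂ) = ((c*μ : ℝ) : ℂ) := by push_cast; linear_combination h
    exact_mod_cast this
  · exact absurd h hvz

lemma vec_structure {d : ℕ} (μ : Fin d → ℝ) (t : ℝ) (ht : 0 < t)
    (htri : ∀ i, μ i = t ∨ μ i = -t ∨ μ i = 0)
    (hsum : ∑ i, μ i = 0) (hsq : ∑ i, (μ i)^2 = 2*t^2) :
    ∃ i j, i ≠ j ∧ μ i = t ∧ μ j = -t ∧ ∀ k, k ≠ i → k ≠ j → μ k = 0 := by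
  classical
  have htne : t ≠ -t := by intro h; nlinarith
  set S := Finset.univ.filter (fun i => μ i = t) with hS
  set T := Finset.univ.filter (fun i => μ i = -t) with hT
  have key : ∀ g : ℝ → ℝ, g 0 = 0 → ∑ i, g (μ i) = S.card * g t + T.card * g (-t) := by
    intro g hg
    rw [← Finset.sum_filter_add_sum_filter_not Finset.univ (fun i => μ i = t) (fun i => g (μ i)),
      ← Finset.sum_filter_add_sum_filter_not (Finset.univ.filter (fun i => ¬ μ i = t))
        (fun i => μ i = -t) (fun i => g (μ i))]
    have e1 : ∑ i ∈ S, g (μ i) = S.card * g t := by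
      rw [Finset.sum_congr rfl (fun i hi => by rw [(Finset.mem_filter.mp hi).2])]
      simp [mul_comm]
    have hTT : (Finset.univ.filter (fun i => ¬ μ i = t)).filter (fun i => μ i = -t) = T := by
      ext k; simp only [hT, Finset.mem_filter, Finset.mem_univ, true_and]
      constructor
      · rintro ⟨_, h2⟩; exact h2
      · intro h; exact ⟨fun h' => htne (h'.symm.trans h), h⟩
    have e2 : ∑ i ∈ (Finset.univ.filter (fun i => ¬ μ i = t)).filter (fun i => μ i = -t),
        g (μ i) = T.card * g (-t) := by
      rw [hTT, Finset.sum_congr rfl (fun i hi => by rw [(Finset.mem_filter.mp hi).2])]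
      simp [mul_comm]
    have e3 : ∑ i ∈ (Finset.univ.filter (fun i => ¬ μ i = t)).filter (fun i => ¬ μ i = -t),
        g (μ i) = 0 := by
      apply Finset.sum_eq_zero
      intro i hi
      simp only [Finset.mem_filter] at hi
      rcases htri i with h | h | h
      · exact absurd h hi.1.2
      · exact absurd h hi.2
      · rw [h, hg]
    rw [e1, e2, e3, add_zero]
  have k1 := key id rfl
  have k2 := key (fun x => x^2) (by norm_num)
  simp only [id] at k1
  rw [hsum] at k1
  rw [hsq] at k2
  have hc1 : (S.card : ℝ) = T.card := by
    have : ((S.card : ℝ) - T.card) * t = 0 := by ring_nf; ring_nf at k1; linarith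
    rcases mul_eq_zero.mp this with h | h
    · linarith
    · exact absurd h ht.ne'
  have hc2 : (S.card : ℝ) + T.card = 2 := by
    have h2 : ((S.card : ℝ) + T.card) * t^2 = 2 * t^2 := by ring_nf; ring_nf at k2; linarith
    have := mul_right_cancel₀ (pow_ne_zero 2 ht.ne') h2
    linarith
  have hS1 : S.card = 1 := by
    have : (S.card : ℝ) = 1 := by linarith
    exact_mod_cast this
  have hT1 : T.card = 1 := by
    have : (T.card : ℝ) = 1 := by linarith
    exact_mod_cast this
  obtain ⟨i, hi⟩ := Finset.card_eq_one.mp hS1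
  obtain ⟨j, hj⟩ := Finset.card_eq_one.mp hT1
  have hμi : μ i = t := by
    have : i ∈ S := hi ▸ Finset.mem_singleton_self i
    exact (Finset.mem_filter.mp this).2
  have hμj : μ j = -t := by
    have : j ∈ T := hj ▸ Finset.mem_singleton_self j
    exact (Finset.mem_filter.mp this).2
  refine ⟨i, j, ?_, hμi, hμj, ?_⟩
  · intro h; rw [h, hμj] at hμi; exact htne hμi.symm
  · intro k hki hkj
    rcases htri k with h | h | h
    · refine absurd ?_ hki
      have : k ∈ S := Finset.mem_filter.mpr ⟨Finset.mem_univ k, h⟩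
      rwa [hi, Finset.mem_singleton] at this
    · refine absurd ?_ hkj
      have : k ∈ T := Finset.mem_filter.mpr ⟨Finset.mem_univ k, h⟩
      rwa [hj, Finset.mem_singleton] at this
    · exact h

lemma herm_data {d : ℕ} {A : Matrix (Fin d) (Fin d) ℂ} (hA : A.IsHermitian) (t : ℝ) (ht : 0 < t)
    (h3 : A*A*A = ((t^2 : ℝ) : ℂ) • A)
    (h1 : A.trace = 0)
    (h2 : (A*A).trace = ((2*t^2 : ℝ) : ℂ)) :
    ∃ i j, i ≠ j ∧ hA.eigenvalues i = t ∧ hA.eigenvalues j = -t ∧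
      ∀ k, k ≠ i → k ≠ j → hA.eigenvalues k = 0 := by
  apply vec_structure _ t ht
  · intro i
    have hcub := eig_cubic hA (t^2) (by exact_mod_cast h3) i
    set μ := hA.eigenvalues i
    have hfac : (μ - t) * (μ + t) * μ = 0 := by linear_combination hcub
    rcases mul_eq_zero.mp hfac with h | h
    · rcases mul_eq_zero.mp h with h | h
      · exact Or.inl (by linarith)
      · exact Or.inr (Or.inl (by linarith))
    · exact Or.inr (Or.inr h)
  · have := herm_trace_eq hA
    rw [h1] at this
    exact_mod_cast this.symm
  · have := herm_trace_sq_eq hA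
    rw [h2] at this
    exact_mod_cast this.symm

lemma sum_abs_rpow {d : ℕ} (μ : Fin d → ℝ) (t : ℝ) (ht : 0 < t) (p : ℝ) (hp : p ≠ 0)
    {i j : Fin d} (hij : i ≠ j) (hi : μ i = t) (hj : μ j = -t)
    (h0 : ∀ k, k ≠ i → k ≠ j → μ k = 0) :
    ∑ k, |μ k| ^ p = 2 * t ^ p := by
  classical
  rw [← Finset.sum_subset (Finset.subset_univ {i, j})
    (fun x _ hx => by
      simp only [Finset.mem_insert, Finset.mem_singleton, not_or] at hx
      rw [h0 x hx.1 hx.2, abs_zero, Real.zero_rpow hp])]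
  rw [Finset.sum_pair hij, hi, hj, abs_neg, abs_of_pos ht]
  ring

lemma herm_decomp {d : ℕ} {A : Matrix (Fin d) (Fin d) ℂ} (hA : A.IsHermitian) {t : ℝ}
    {i j : Fin d} (hij : i ≠ j) (hi : hA.eigenvalues i = t) (hj : hA.eigenvalues j = -t)
    (h0 : ∀ k, k ≠ i → k ≠ j → hA.eigenvalues k = 0) :
    ∃ e f : Fin d → ℂ, star e ⬝ᵥ e = 1 ∧ star f ⬝ᵥ f = 1 ∧
      A = (t:ℂ) • vecMulVec e (star e) - (t:ℂ) • vecMulVec f (star f) := by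
  classical
  set U : Matrix (Fin d) (Fin d) ℂ := (hA.eigenvectorUnitary : Matrix (Fin d) (Fin d) ℂ) with hU
  have hUU : star U * U = 1 := Matrix.mem_unitaryGroup_iff'.mp hA.eigenvectorUnitary.2
  refine ⟨fun k => U k i, fun k => U k j, ?_, ?_, ?_⟩
  · have := congrFun (congrFun hUU i) i
    simpa [Matrix.mul_apply, dotProduct, Matrix.one_apply] using this
  · have := congrFun (congrFun hUU j) j
    simpa [Matrix.mul_apply, dotProduct, Matrix.one_apply] using this
  · conv_lhs => rw [hA.spectral_theorem]; simp only [Unitary.conjStarAlgAut_apply, Unitary.coe_star, ← hU]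
    ext r s
    have expand : ((U * diagonal (RCLike.ofReal ∘ hA.eigenvalues) * star U :
          Matrix (Fin d) (Fin d) ℂ)) r s
        = ∑ k, U r k * (hA.eigenvalues k : ℂ) * (starRingEnd ℂ) (U s k) := by
      rw [Matrix.mul_apply]
      refine Finset.sum_congr rfl fun k _ => ?_
      rw [Matrix.mul_diagonal]
      simp [Matrix.star_apply, RCLike.star_def]
    rw [expand]
    rw [← Finset.sum_subset (Finset.subset_univ {i, j})
      (fun x _ hx => by
        simp only [Finset.mem_insert, Finset.mem_singleton, not_or] at hx
        rw [h0 x hx.1 hx.2]; simp)]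
    rw [Finset.sum_pair hij, hi, hj]
    simp [vecMulVec_apply, Matrix.sub_apply, Matrix.smul_apply, smul_eq_mul, Pi.star_apply]
    ring

lemma trace_herm_mul {d : ℕ} (D M : Matrix (Fin d) (Fin d) ℂ) (hD : D.IsHermitian) :
    (D * M).trace = ∑ k, (hD.eigenvalues k : ℂ) *
      ((star (hD.eigenvectorUnitary : Matrix (Fin d) (Fin d) ℂ) * M *
        (hD.eigenvectorUnitary : Matrix (Fin d) (Fin d) ℂ)) k k) := by
  set V : Matrix (Fin d) (Fin d) ℂ := (hD.eigenvectorUnitary : Matrix (Fin d) (Fin d) ℂ) with hV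
  conv_lhs => rw [hD.spectral_theorem]; simp only [Unitary.conjStarAlgAut_apply, Unitary.coe_star, ← hV]
  rw [show V * diagonal (RCLike.ofReal ∘ hD.eigenvalues) * star V * M
      = V * (diagonal (RCLike.ofReal ∘ hD.eigenvalues) * (star V * M)) by
    noncomm_ring]
  rw [Matrix.trace_mul_comm, Matrix.mul_assoc, Matrix.mul_assoc, ← Matrix.mul_assoc (star V)]
  rw [Matrix.trace]
  refine Finset.sum_congr rfl fun k _ => ?_
  rw [Matrix.diag_apply, Matrix.mul_apply]
  rw [Finset.sum_eq_single k (fun l _ hl => by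
    simp [Matrix.diagonal_apply_ne _ (Ne.symm hl)]) (by simp)]
  simp

lemma entry_vmv {d : ℕ} (V : Matrix (Fin d) (Fin d) ℂ) (e : Fin d → ℂ) (k : Fin d) :
    (star V * vecMulVec e (star e) * V) k k = (Complex.normSq ((star V *ᵥ e) k) : ℂ) := by
  have h : (star V * vecMulVec e (star e) * V) k k
      = (∑ r, (star V) k r * e r) * (∑ s, (starRingEnd ℂ) (e s) * V s k) := by
    rw [Matrix.mul_apply]
    simp only [Matrix.mul_apply, vecMulVec_apply, Pi.star_apply, RCLike.star_def]
    simp only [Finset.sum_mul, Finset.mul_sum]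
    exact Finset.sum_congr rfl fun s _ => Finset.sum_congr rfl fun r _ => by ring
  rw [h]
  have hx : (star V *ᵥ e) k = ∑ r, (star V) k r * e r := by
    simp [Matrix.mulVec, dotProduct]
  have hx' : (starRingEnd ℂ) ((star V *ᵥ e) k) = ∑ s, (starRingEnd ℂ) (e s) * V s k := by
    rw [hx, map_sum]
    refine Finset.sum_congr rfl fun s _ => ?_
    simp [Matrix.star_apply, mul_comm]
  rw [← hx, ← hx', Complex.mul_conj]

lemma sum_normSq_mulVec {d : ℕ} (V : Matrix (Fin d) (Fin d) ℂ) (hV : V * star V = 1)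
    (e : Fin d → ℂ) (he : star e ⬝ᵥ e = 1) :
    ∑ k, Complex.normSq ((star V *ᵥ e) k) = 1 := by
  set x := star V *ᵥ e with hxdef
  have hV' : V * Vᴴ = 1 := by rw [← Matrix.star_eq_conjTranspose]; exact hV
  have h1 : star x ⬝ᵥ x = 1 := by
    rw [hxdef, Matrix.star_mulVec, Matrix.star_eq_conjTranspose V,
      Matrix.conjTranspose_conjTranspose, Matrix.dotProduct_mulVec, Matrix.vecMul_vecMul,
      hV', Matrix.vecMul_one, he]
  have h2 : star x ⬝ᵥ x = ((∑ k, Complex.normSq (x k) : ℝ) : ℂ) := by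
    push_cast
    rw [dotProduct]
    refine Finset.sum_congr rfl fun k _ => ?_
    simp [Pi.star_apply, mul_comm, Complex.mul_conj]
  rw [h2] at h1
  exact_mod_cast h1

lemma scalar_bound {n : ℕ} (p : ℝ) (hp : 1 ≤ p) (t : ℝ) (ht : 0 < t) (ν τ : Fin n → ℝ)
    (hν : ∑ k, |ν k| ^ p ≤ 1) (hτ1 : ∀ k, |τ k| ≤ t) (hτ2 : ∑ k, |τ k| ≤ 2*t) :
    ∑ k, ν k * τ k ≤ 2 ^ (1 - 1/p) * t := by
  have hp0 : 0 < p := lt_of_lt_of_le one_pos hp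
  have h1 : ∑ k, ν k * τ k ≤ ∑ k, |τ k| * |ν k| :=
    Finset.sum_le_sum fun k _ => by
      rw [mul_comm (|τ k|)]
      calc ν k * τ k ≤ |ν k * τ k| := le_abs_self _
        _ = |ν k| * |τ k| := abs_mul _ _
  have h2 := Real.inner_le_weight_mul_Lp_of_nonneg Finset.univ hp (fun k => |τ k|)
    (fun k => |ν k|) (fun k => abs_nonneg _) (fun k => abs_nonneg _)
  have h3 : (∑ k, |τ k|) ^ (1 - p⁻¹) ≤ (2*t) ^ (1 - p⁻¹) := by
    apply Real.rpow_le_rpow (Finset.sum_nonneg fun k _ => abs_nonneg _) hτ2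
    have : p⁻¹ ≤ 1 := by
      rw [inv_le_one_iff₀]; right; exact hp
    linarith
  have h4 : (∑ k, |τ k| * |ν k| ^ p) ^ (p⁻¹) ≤ t ^ (p⁻¹) := by
    apply Real.rpow_le_rpow
    · exact Finset.sum_nonneg fun k _ => mul_nonneg (abs_nonneg _)
        (Real.rpow_nonneg (abs_nonneg _) _)
    · calc ∑ k, |τ k| * |ν k| ^ p ≤ ∑ k, t * |ν k| ^ p :=
            Finset.sum_le_sum fun k _ => by
              exact mul_le_mul_of_nonneg_right (hτ1 k) (Real.rpow_nonneg (abs_nonneg _) _)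
        _ = t * ∑ k, |ν k| ^ p := by rw [Finset.mul_sum]
        _ ≤ t * 1 := by exact mul_le_mul_of_nonneg_left hν ht.le
        _ = t := mul_one t
    · exact inv_nonneg.mpr hp0.le
  calc ∑ k, ν k * τ k ≤ ∑ k, |τ k| * |ν k| := h1
    _ ≤ (∑ k, |τ k|) ^ (1 - p⁻¹) * (∑ k, |τ k| * |ν k| ^ p) ^ p⁻¹ := h2
    _ ≤ (2*t) ^ (1 - p⁻¹) * t ^ p⁻¹ := by
        apply mul_le_mul h3 h4
        · exact Real.rpow_nonneg (Finset.sum_nonneg fun k _ => mul_nonneg (abs_nonneg _)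
            (Real.rpow_nonneg (abs_nonneg _) _)) _
        · exact Real.rpow_nonneg (by linarith) _
    _ = 2 ^ (1 - 1/p) * t := by
        rw [Real.mul_rpow (by norm_num) ht.le, mul_assoc, ← Real.rpow_add ht]
        norm_num

variable {d : ℕ} (a b : Fin d → ℂ)

lemma M_cube (ha : star a ⬝ᵥ a = 1) (hb : star b ⬝ᵥ b = 1) :
    (outerProd a - outerProd b) * (outerProd a - outerProd b) * (outerProd a - outerProd b)
    = (1 - (star a ⬝ᵥ b) * (star b ⬝ᵥ a)) • (outerProd a - outerProd b) := by
  simp only [outerProd, sub_mul, mul_sub, vmv_mul, ha, hb, one_smul, Matrix.smul_mul,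
    smul_sub, smul_smul, sub_smul]
  module

lemma M_trace (ha : star a ⬝ᵥ a = 1) (hb : star b ⬝ᵥ b = 1) :
    (outerProd a - outerProd b).trace = 0 := by
  simp [outerProd, trace_vmv, ha, hb, dotProduct_comm a (star a), dotProduct_comm b (star b)]

lemma M_trace_sq (ha : star a ⬝ᵥ a = 1) (hb : star b ⬝ᵥ b = 1) :
    ((outerProd a - outerProd b) * (outerProd a - outerProd b)).trace
    = 2 - 2 * ((star a ⬝ᵥ b) * (star b ⬝ᵥ a)) := by
  simp only [outerProd, sub_mul, mul_sub, vmv_mul, ha, hb, one_smul]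
  rw [Matrix.trace_sub, Matrix.trace_sub, Matrix.trace_sub, Matrix.trace_smul, Matrix.trace_smul]
  simp [trace_vmv, ha, hb, dotProduct_comm a (star a), dotProduct_comm b (star b),
    dotProduct_comm b (star a), dotProduct_comm a (star b)]
  ring

lemma M_herm : (outerProd a - outerProd b).IsHermitian := by
  have h : ∀ u : Fin d → ℂ, (outerProd u).IsHermitian := by
    intro u
    show (outerProd u)ᴴ = outerProd u
    ext i j
    simp [outerProd, vecMulVec_apply, conjTranspose_apply, mul_comm]
  exact (h a).sub (h b)

lemma conj_dot : star b ⬝ᵥ a = (starRingEnd ℂ) (star a ⬝ᵥ b) := by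
  simp [dotProduct, map_sum, mul_comm]

lemma abs_lt_one (ha : star a ⬝ᵥ a = 1) (hb : star b ⬝ᵥ b = 1)
    (hne : outerProd a ≠ outerProd b) :
    ‖star a ⬝ᵥ b‖ ^ 2 < 1 := by
  set c := star a ⬝ᵥ b with hc
  set w : Fin d → ℂ := b - c • a with hw
  have haw : star a ⬝ᵥ w = 0 := by
    simp [hw, dotProduct_sub, dotProduct_smul, ha, smul_eq_mul, hc]
  have hbw : star w ⬝ᵥ w = 1 - (Complex.normSq c : ℂ) := by
    have h1 : star w = star b - (starRingEnd ℂ) c • star a := by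
      simp [hw, star_sub, star_smul]
    rw [h1, sub_dotProduct, smul_dotProduct, haw, smul_eq_mul, mul_zero, sub_zero,
      hw, dotProduct_sub, dotProduct_smul, hb, smul_eq_mul]
    have : star b ⬝ᵥ a = (starRingEnd ℂ) c := by simp [hc, dotProduct, map_sum, mul_comm]
    rw [this, Complex.mul_conj']
    norm_cast
    rw [← Complex.sq_norm]
  have hsum : (∑ i, Complex.normSq (w i) : ℝ) = 1 - Complex.normSq c := by
    have : star w ⬝ᵥ w = ((∑ i, Complex.normSq (w i) : ℝ) : ℂ) := by
      push_cast
      simp [dotProduct, Pi.star_apply, Complex.mul_conj']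
      exact Finset.sum_congr rfl fun i _ => by rw [mul_comm, Complex.mul_conj]
    rw [this] at hbw
    exact_mod_cast hbw
  have hle : 0 ≤ 1 - Complex.normSq c := by
    rw [← hsum]; exact Finset.sum_nonneg fun i _ => Complex.normSq_nonneg _
  rw [Complex.sq_norm]
  rcases lt_or_eq_of_le hle with h | h
  · linarith
  · exfalso
    have hw0 : w = 0 := by
      have hz : ∑ i, Complex.normSq (w i) = 0 := by rw [hsum, ← h]
      funext i
      have := (Finset.sum_eq_zero_iff_of_nonneg
        (fun i _ => Complex.normSq_nonneg (w i))).mp hz i (Finset.mem_univ i)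
      exact Complex.normSq_eq_zero.mp this
    have hba : b = c • a := by
      have := sub_eq_zero.mp (hw ▸ hw0)
      exact this
    apply hne
    rw [hba]
    unfold outerProd
    ext i j
    simp [vecMulVec_apply, Pi.smul_apply, smul_eq_mul, Pi.star_apply]
    have h1 : Complex.normSq c = 1 := by linarith [h]
    have : ((starRingEnd ℂ) c) * c = 1 := by
      rw [mul_comm, Complex.mul_conj, h1]; norm_num
    ring_nf
    calc a i * (starRingEnd ℂ) (a j) = (c * (starRingEnd ℂ) c) * (a i * (starRingEnd ℂ) (a j)) := by
          rw [mul_comm c _, this, one_mul]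
      _ = c * a i * ((starRingEnd ℂ) c * (starRingEnd ℂ) (a j)) := by ring
    ring

end Aux

/-- Lemma 1: for distinct pure states `ρ = |a⟩⟨a|`, `σ = |b⟩⟨b|` on `ℂ^d` (`d ≥ 2`),
`λ = √(1 - |⟨a,b⟩|²)` and `p ≥ 1`:
every Hermitian `D` with `‖D‖_p ≤ 1` satisfies `Tr(D(ρ - σ)) ≤ 2^(1-1/p) λ`, and the
Hermitian matrix `D* = (2^(-1/p)/λ)(ρ - σ)` satisfies `‖D*‖_p ≤ 1` and achieves
`Tr(D*(ρ - σ)) = 2^(1-1/p) λ`. -/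
theorem optimal_discriminator_maximizes_trace
    {d : ℕ} (hd : 2 ≤ d) (a b : Fin d → ℂ)
    (ha : star a ⬝ᵥ a = 1) (hb : star b ⬝ᵥ b = 1)
    (hne : outerProd a ≠ outerProd b)
    (lam : ℝ) (hlam : lam = Real.sqrt (1 - ‖star a ⬝ᵥ b‖ ^ 2))
    (p : ℝ) (hp : 1 ≤ p) :
    (∀ (D : Matrix (Fin d) (Fin d) ℂ) (hD : D.IsHermitian),
        schattenNorm p hD ≤ 1 →
        Matrix.trace (D * (outerProd a - outerProd b)) ≤
          (((2 : ℝ) ^ (1 - 1 / p) * lam : ℝ) : ℂ)) ∧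
    ∃ hD : ((((2 : ℝ) ^ (-(1 / p)) / lam : ℝ) : ℂ) •
        (outerProd a - outerProd b)).IsHermitian,
      schattenNorm p hD ≤ 1 ∧
      Matrix.trace (((((2 : ℝ) ^ (-(1 / p)) / lam : ℝ) : ℂ) •
          (outerProd a - outerProd b)) * (outerProd a - outerProd b)) =
        (((2 : ℝ) ^ (1 - 1 / p) * lam : ℝ) : ℂ) := by
  have hp0 : 0 < p := lt_of_lt_of_le one_pos hp
  set M : Matrix (Fin d) (Fin d) ℂ := outerProd a - outerProd b with hMdef
  have hM : M.IsHermitian := M_herm a b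
  set c : ℂ := star a ⬝ᵥ b with hc
  have habs : ‖c‖ ^ 2 < 1 := abs_lt_one a b ha hb hne
  have hlampos : 0 < lam := by
    rw [hlam]; exact Real.sqrt_pos.mpr (by linarith)
  have hlamsq : lam ^ 2 = 1 - ‖c‖ ^ 2 := by
    rw [hlam, Real.sq_sqrt (by linarith)]
  have hcc : c * (star b ⬝ᵥ a) = ((‖c‖ ^ 2 : ℝ) : ℂ) := by
    rw [conj_dot a b, ← hc, Complex.mul_conj, Complex.sq_norm]
  have h3 : M * M * M = ((lam^2 : ℝ) : ℂ) • M := by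
    rw [hMdef, M_cube a b ha hb, ← hc, hcc]
    congr 1
    rw [hlamsq]
    push_cast
    ring
  have h1 : M.trace = 0 := M_trace a b ha hb
  have h2 : (M * M).trace = ((2 * lam^2 : ℝ) : ℂ) := by
    rw [hMdef, M_trace_sq a b ha hb, ← hc, hcc, hlamsq]
    push_cast
    ring
  obtain ⟨i, j, hij, hi, hj, h0⟩ := herm_data hM lam hlampos h3 h1 h2
  obtain ⟨e, f, he, hf, hMef⟩ := herm_decomp hM hij hi hj h0
  constructor
  · -- Part 1
    intro D hD hSch
    have hνsum : ∑ k, |hD.eigenvalues k| ^ p ≤ 1 := by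
      by_contra hcon
      push_neg at hcon
      have : (1:ℝ) < (∑ k, |hD.eigenvalues k| ^ p) ^ (1/p) := by
        calc (1:ℝ) = 1 ^ (1/p) := (Real.one_rpow _).symm
          _ < _ := Real.rpow_lt_rpow (by norm_num) hcon (by positivity)
      rw [schattenNorm] at hSch
      linarith
    set V : Matrix (Fin d) (Fin d) ℂ := (hD.eigenvectorUnitary : Matrix (Fin d) (Fin d) ℂ)
      with hVdef
    have hVV : V * star V = 1 := Matrix.mem_unitaryGroup_iff.mp hD.eigenvectorUnitary.2
    set x : Fin d → ℂ := star V *ᵥ e with hxdef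
    set y : Fin d → ℂ := star V *ᵥ f with hydef
    set τ : Fin d → ℝ := fun k => lam * (Complex.normSq (x k) - Complex.normSq (y k)) with hτdef
    have hx1 : ∑ k, Complex.normSq (x k) = 1 := sum_normSq_mulVec V hVV e he
    have hy1 : ∑ k, Complex.normSq (y k) = 1 := sum_normSq_mulVec V hVV f hf
    have hxle : ∀ k, Complex.normSq (x k) ≤ 1 := by
      intro k
      rw [← hx1]
      exact Finset.single_le_sum (fun l _ => Complex.normSq_nonneg _) (Finset.mem_univ k)
    have hyle : ∀ k, Complex.normSq (y k) ≤ 1 := by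
      intro k
      rw [← hy1]
      exact Finset.single_le_sum (fun l _ => Complex.normSq_nonneg _) (Finset.mem_univ k)
    have hdiag : ∀ k, (star V * M * V) k k = ((τ k : ℝ) : ℂ) := by
      intro k
      have hexp : star V * M * V
          = (lam:ℂ) • (star V * vecMulVec e (star e) * V)
            - (lam:ℂ) • (star V * vecMulVec f (star f) * V) := by
        rw [hMef]
        rw [Matrix.mul_sub, Matrix.sub_mul, Matrix.mul_smul, Matrix.smul_mul,
          Matrix.mul_smul, Matrix.smul_mul, Matrix.mul_assoc, Matrix.mul_assoc,
          ← Matrix.mul_assoc (star V), ← Matrix.mul_assoc (star V)]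
      rw [hexp]
      rw [Matrix.sub_apply, Matrix.smul_apply, Matrix.smul_apply, entry_vmv, entry_vmv]
      rw [hτdef]
      rw [smul_eq_mul, smul_eq_mul]
      push_cast
      ring
    have htrace : (D * M).trace = ((∑ k, hD.eigenvalues k * τ k : ℝ) : ℂ) := by
      rw [trace_herm_mul D M hD, ← hVdef]
      push_cast
      refine Finset.sum_congr rfl fun k _ => ?_
      rw [hdiag k]
    have hτ1 : ∀ k, |τ k| ≤ lam := by
      intro k
      rw [hτdef, abs_mul, abs_of_pos hlampos]
      have hd1 : |Complex.normSq (x k) - Complex.normSq (y k)| ≤ 1 := by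
        rw [abs_le]
        constructor
        · nlinarith [Complex.normSq_nonneg (x k), hyle k]
        · nlinarith [Complex.normSq_nonneg (y k), hxle k]
      nlinarith
    have hτ2 : ∑ k, |τ k| ≤ 2 * lam := by
      calc ∑ k, |τ k| ≤ ∑ k, lam * (Complex.normSq (x k) + Complex.normSq (y k)) := by
            refine Finset.sum_le_sum fun k _ => ?_
            rw [hτdef, abs_mul, abs_of_pos hlampos]
            refine mul_le_mul_of_nonneg_left ?_ hlampos.le
            rw [abs_le]
            constructor
            · nlinarith [Complex.normSq_nonneg (x k), Complex.normSq_nonneg (y k)]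
            · nlinarith [Complex.normSq_nonneg (x k), Complex.normSq_nonneg (y k)]
        _ = lam * ((∑ k, Complex.normSq (x k)) + (∑ k, Complex.normSq (y k))) := by
            rw [← Finset.mul_sum, Finset.sum_add_distrib]
        _ = 2 * lam := by rw [hx1, hy1]; ring
    have hbound := scalar_bound p hp lam hlampos hD.eigenvalues τ hνsum hτ1 hτ2
    rw [htrace]
    exact Complex.real_le_real.mpr hbound
  · -- Part 2
    set r : ℝ := (2 : ℝ) ^ (-(1 / p)) / lam with hrdef
    set t' : ℝ := (2 : ℝ) ^ (-(1 / p)) with ht'def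
    have ht'pos : 0 < t' := Real.rpow_pos_of_pos (by norm_num) _
    have hrpos : 0 < r := div_pos ht'pos hlampos
    have hrl : r * lam = t' := div_mul_cancel₀ _ hlampos.ne'
    have hDstar : (((r : ℝ) : ℂ) • M).IsHermitian := by
      show (((r : ℝ) : ℂ) • M)ᴴ = ((r : ℝ) : ℂ) • M
      rw [Matrix.conjTranspose_smul, hM.eq]
      congr 1
      exact Complex.conj_ofReal r
    refine ⟨hDstar, ?_, ?_⟩
    · -- schattenNorm ≤ 1
      have hcube : (((r:ℝ):ℂ) • M) * (((r:ℝ):ℂ) • M) * (((r:ℝ):ℂ) • M)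
          = (((r:ℂ)) * ((r:ℂ)) * ((r:ℂ))) • (M * M * M) := by
        simp only [Matrix.smul_mul, Matrix.mul_smul, smul_smul]
        congr 1
        ring
      have h3' : (((r:ℝ):ℂ) • M) * (((r:ℝ):ℂ) • M) * (((r:ℝ):ℂ) • M)
          = ((t'^2 : ℝ) : ℂ) • (((r:ℝ):ℂ) • M) := by
        rw [hcube, h3, smul_smul, smul_smul]
        congr 1
        have hre : r * r * r * lam^2 = t'^2 * r := by
          calc r * r * r * lam^2 = (r * lam)^2 * r := by ring
            _ = t'^2 * r := by rw [hrl]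
        calc ((r:ℂ)) * ((r:ℂ)) * ((r:ℂ)) * ((lam^2:ℝ):ℂ) = (((r*r*r*lam^2 : ℝ)):ℂ) := by
              push_cast; ring
          _ = (((t'^2 * r : ℝ)):ℂ) := by rw [hre]
          _ = ((t'^2:ℝ):ℂ) * ((r:ℝ):ℂ) := by push_cast; ring
      have h1' : (((r:ℝ):ℂ) • M).trace = 0 := by
        rw [Matrix.trace_smul, h1, smul_zero]
      have h2' : ((((r:ℝ):ℂ) • M) * (((r:ℝ):ℂ) • M)).trace = ((2 * t'^2 : ℝ) : ℂ) := by
        have hsq : (((r:ℝ):ℂ) • M) * (((r:ℝ):ℂ) • M) = (((r:ℂ)) * ((r:ℂ))) • (M * M) := by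
          simp only [Matrix.smul_mul, Matrix.mul_smul, smul_smul]
        rw [hsq, Matrix.trace_smul, h2, smul_eq_mul]
        have hre : r * r * (2 * lam^2) = 2 * t'^2 := by
          calc r * r * (2*lam^2) = 2 * (r*lam)^2 := by ring
            _ = 2 * t'^2 := by rw [hrl]
        calc ((r:ℂ)) * ((r:ℂ)) * ((2*lam^2 : ℝ):ℂ) = (((r*r*(2*lam^2) : ℝ)):ℂ) := by
              push_cast; ring
          _ = ((2*t'^2 : ℝ):ℂ) := by rw [hre]
      obtain ⟨i', j', hij', hi', hj', h0'⟩ := herm_data hDstar t' ht'pos h3' h1' h2'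
      have hsum' : ∑ k, |hDstar.eigenvalues k| ^ p = 2 * t' ^ p :=
        sum_abs_rpow _ t' ht'pos p hp0.ne' hij' hi' hj' h0'
      rw [schattenNorm, hsum']
      have ht'p : t' ^ p = 1/2 := by
        rw [ht'def, ← Real.rpow_mul (by norm_num : (0:ℝ) ≤ 2)]
        rw [show (-(1/p))*p = -1 by field_simp]
        rw [Real.rpow_neg_one]
        norm_num
      rw [ht'p]
      norm_num [Real.one_rpow]
    · -- trace equality
      rw [Matrix.smul_mul, Matrix.trace_smul, h2, smul_eq_mul]
      have key : r * (2 * lam^2) = (2:ℝ) ^ (1 - 1/p) * lam := by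
        have h2a : (2:ℝ) ^ (1 - 1/p) = 2 * t' := by
          rw [ht'def, show (1:ℝ) - 1/p = 1 + (-(1/p)) by ring, Real.rpow_add (by norm_num),
            Real.rpow_one]
        rw [h2a, hrdef]
        field_simp
      calc ((r:ℝ):ℂ) * ((2*lam^2 : ℝ):ℂ) = ((r * (2*lam^2) : ℝ):ℂ) := by push_cast; ring
        _ = (((2:ℝ) ^ (1 - 1/p) * lam : ℝ):ℂ) := by rw [key]
end

section
/- Let $d \ge 2$, let $a, b$ be unit vectors in $\mathbb{C}^d$ with $\rho_1 = |a\rangle\langle a|$, $\sigma = |b\rangle\langle b|$, and $F = |\langle a, b\rangle|^2 < 1$. Then every density matrix $\rho_2$ attaining the minimum of $\mathrm{Tr}((\rho_1 - \sigma)\rho_2)$ over density matrices (i.e., with $\mathrm{Tr}((\rho_1 - \sigma)\rho_2) = -\sqrt{1-F}$) is the rank-one orthogonal projection onto the eigenvector of $\rho_1 - \sigma$ with eigenvalue $-\sqrt{1-F}$, and it satisfies $\mathrm{Tr}(\sigma\rho_2) = \frac{1 + \sqrt{1-F}}{2} \ge 1 - \frac{F}{2}$. -/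
open Matrix ComplexOrder

/-- A density matrix: positive semidefinite (hence Hermitian) with trace one. -/
def IsDensity {d : ℕ} (ρ : Matrix (Fin d) (Fin d) ℂ) : Prop :=
  ρ.PosSemidef ∧ ρ.trace = 1

private lemma vmv_mul_vmv {d : ℕ} (x y z w : Fin d → ℂ) :
    vecMulVec x y * vecMulVec z w = (y ⬝ᵥ z) • vecMulVec x w := by
  ext i j
  simp only [Matrix.mul_apply, Matrix.vecMulVec_apply, Matrix.smul_apply, smul_eq_mul,
    dotProduct, Finset.sum_mul]
  exact Finset.sum_congr rfl fun k _ => by ring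

private lemma mul_vmv {d : ℕ} (A : Matrix (Fin d) (Fin d) ℂ) (x y : Fin d → ℂ) :
    A * vecMulVec x y = vecMulVec (A *ᵥ x) y := by
  ext i j
  simp only [Matrix.mul_apply, Matrix.vecMulVec_apply, Matrix.mulVec, dotProduct,
    Finset.sum_mul]
  exact Finset.sum_congr rfl fun k _ => by ring

private lemma vmv_mulVec {d : ℕ} (x y z : Fin d → ℂ) :
    vecMulVec x y *ᵥ z = (y ⬝ᵥ z) • x := by
  funext i
  simp only [Matrix.mulVec, Matrix.vecMulVec_apply, dotProduct, Pi.smul_apply, smul_eq_mul,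
    Finset.sum_mul]
  exact Finset.sum_congr rfl fun k _ => by ring

private lemma smul_vmv {d : ℕ} (s : ℂ) (x y : Fin d → ℂ) :
    vecMulVec (s • x) y = s • vecMulVec x y := by
  ext i j
  simp only [Matrix.vecMulVec_apply, Pi.smul_apply, Matrix.smul_apply, smul_eq_mul]
  ring

private lemma trace_vmv_mul {d : ℕ} (x y : Fin d → ℂ) (A : Matrix (Fin d) (Fin d) ℂ) :
    Matrix.trace (vecMulVec x y * A) = y ⬝ᵥ (A *ᵥ x) := by
  simp only [Matrix.trace, Matrix.diag, Matrix.mul_apply, Matrix.vecMulVec_apply,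
    dotProduct, Matrix.mulVec, Finset.mul_sum]
  rw [Finset.sum_comm]
  exact Finset.sum_congr rfl fun k _ => Finset.sum_congr rfl fun i _ => by ring

private lemma trace_vmv_s14 {d : ℕ} (x y : Fin d → ℂ) :
    Matrix.trace (vecMulVec x y) = y ⬝ᵥ x := by
  simp [Matrix.trace, Matrix.diag, Matrix.vecMulVec_apply, dotProduct, mul_comm]

private lemma vmv_herm {d : ℕ} (x : Fin d → ℂ) :
    (vecMulVec x (star x))ᴴ = vecMulVec x (star x) := by
  ext i j
  simp [Matrix.conjTranspose_apply, Matrix.vecMulVec_apply, mul_comm]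

private lemma trace_conj_self {d : ℕ} (D : Matrix (Fin d) (Fin d) ℂ) :
    Matrix.trace (Dᴴ * D) = ((∑ j, ∑ i, Complex.normSq (D i j) : ℝ) : ℂ) := by
  push_cast
  simp only [Matrix.trace, Matrix.diag, Matrix.mul_apply, Matrix.conjTranspose_apply]
  exact Finset.sum_congr rfl fun j _ => Finset.sum_congr rfl fun i _ => by
    rw [Complex.star_def, ← Complex.normSq_eq_conj_mul_self]

set_option maxHeartbeats 1000000 in
/-- For pure states `ρ₁ = |a⟩⟨a|`, `σ = |b⟩⟨b|` on `ℂ^d` (`d ≥ 2`) with fidelity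
`F = |⟨a,b⟩|² < 1`: every density matrix `ρ₂` attaining the minimum
`Tr((ρ₁ - σ)ρ₂) = -√(1-F)` is the rank-one orthogonal projection onto the eigenvector
of `ρ₁ - σ` with eigenvalue `-√(1-F)` (i.e. `ρ₂` is an idempotent with
`(ρ₁ - σ)ρ₂ = -√(1-F) ρ₂`), and it satisfies
`Tr(σρ₂) = (1 + √(1-F))/2 ≥ 1 - F/2`. -/
theorem minimizer_is_negative_eigenprojection
    {d : ℕ} (hd : 2 ≤ d) (a b : Fin d → ℂ)
    (ha : star a ⬝ᵥ a = 1) (hb : star b ⬝ᵥ b = 1)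
    (F : ℝ) (hF : F = ‖star a ⬝ᵥ b‖ ^ 2) (hF1 : F < 1)
    (ρ₂ : Matrix (Fin d) (Fin d) ℂ) (hρ₂ : IsDensity ρ₂)
    (hmin : Matrix.trace ((outerProd a - outerProd b) * ρ₂) =
      ((-Real.sqrt (1 - F) : ℝ) : ℂ)) :
    ρ₂ * ρ₂ = ρ₂ ∧
    (outerProd a - outerProd b) * ρ₂ = ((-Real.sqrt (1 - F) : ℝ) : ℂ) • ρ₂ ∧
    Matrix.trace (outerProd b * ρ₂) = (((1 + Real.sqrt (1 - F)) / 2 : ℝ) : ℂ) ∧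
    1 - F / 2 ≤ (1 + Real.sqrt (1 - F)) / 2 := by
  set lam : ℝ := Real.sqrt (1 - F) with hlamdef
  have hFnn : 0 ≤ F := hF ▸ (sq_nonneg _)
  have h1F : 0 < 1 - F := by linarith
  have hlam_pos : 0 < lam := Real.sqrt_pos.mpr h1F
  have hlam2 : lam ^ 2 = 1 - F := Real.sq_sqrt h1F.le
  set L : ℂ := (lam : ℂ) with hLdef
  have hL2 : L ^ 2 = 1 - (F : ℂ) := by
    rw [hLdef]; exact_mod_cast congrArg (Complex.ofReal) hlam2
  set c : ℂ := star a ⬝ᵥ b with hcdef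
  have hcc : (starRingEnd ℂ) c * c = (F : ℂ) := by
    rw [mul_comm, Complex.mul_conj, hF]; norm_cast; exact (Complex.sq_norm c).symm
  have hba : star b ⬝ᵥ a = (starRingEnd ℂ) c := by
    rw [hcdef, star_dotProduct]; simp [Complex.star_def]
  -- the eigenvectors of `Δ = |a⟩⟨a| - |b⟩⟨b|`
  set u : Fin d → ℂ := (1 + L) • a - ((starRingEnd ℂ) c) • b with hudef
  set v : Fin d → ℂ := c • a - (1 + L) • b with hvdef
  have hsu : star u = (1 + L) • star a - c • star b := by
    funext i
    simp [hudef, Pi.star_apply, star_sub, star_mul', Complex.star_def, map_add, _root_.map_one,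
      Complex.conj_ofReal, hLdef]
  have hsv : star v = ((starRingEnd ℂ) c) • star a - (1 + L) • star b := by
    funext i
    simp [hvdef, Pi.star_apply, star_sub, star_mul', Complex.star_def, map_add, _root_.map_one,
      Complex.conj_ofReal, hLdef]
  have hav : star a ⬝ᵥ v = -(L * c) := by
    simp only [hvdef, dotProduct_sub, dotProduct_smul, ha, hcdef, smul_eq_mul]; ring
  have hbv : star b ⬝ᵥ v = -(L * (1 + L)) := by
    have h : star b ⬝ᵥ v = (starRingEnd ℂ) c * c - (1 + L) := by
      simp only [hvdef, dotProduct_sub, dotProduct_smul, hb, hba, smul_eq_mul]; ring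
    rw [h]; linear_combination hcc + hL2
  have hau : star a ⬝ᵥ u = L * (1 + L) := by
    have h : star a ⬝ᵥ u = 1 + L - (starRingEnd ℂ) c * c := by
      simp only [hudef, dotProduct_sub, dotProduct_smul, ha, hcdef, smul_eq_mul]; ring
    rw [h]; linear_combination - hcc - hL2
  have hbu : star b ⬝ᵥ u = L * (starRingEnd ℂ) c := by
    simp only [hudef, dotProduct_sub, dotProduct_smul, hb, hba, smul_eq_mul]; ring
  -- norms and orthogonality
  set N : ℝ := 2 * lam ^ 2 * (1 + lam) with hNdef
  have hNpos : 0 < N := by positivity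
  set Nc : ℂ := (N : ℂ) with hNcdef
  have hNc0 : Nc ≠ 0 := by
    rw [hNcdef]; exact_mod_cast hNpos.ne'
  have hNcL : Nc = 2 * L ^ 2 * (1 + L) := by rw [hNcdef, hNdef, hLdef]; push_cast; ring
  have huu : star u ⬝ᵥ u = Nc := by
    rw [hsu]
    simp only [sub_dotProduct, smul_dotProduct, hau, hbu, smul_eq_mul, hNcL]
    linear_combination (-L) * hcc - L * hL2
  have hvv : star v ⬝ᵥ v = Nc := by
    rw [hsv]
    simp only [sub_dotProduct, smul_dotProduct, hav, hbv, smul_eq_mul, hNcL]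
    linear_combination (-L) * hcc - L * hL2
  have huv : star u ⬝ᵥ v = 0 := by
    rw [hsu]
    simp only [sub_dotProduct, smul_dotProduct, hav, hbv, smul_eq_mul]
    ring
  have hvu : star v ⬝ᵥ u = 0 := by
    rw [hsv]
    simp only [sub_dotProduct, smul_dotProduct, hau, hbu, smul_eq_mul]
    ring
  have hvb : star v ⬝ᵥ b = -(L * (1 + L)) := by
    rw [hsv]
    simp only [sub_dotProduct, smul_dotProduct, hb, hcdef, smul_eq_mul]
    linear_combination hcc + hL2
  -- the matrices
  set U : Matrix (Fin d) (Fin d) ℂ := vecMulVec u (star u) with hUdef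
  set V : Matrix (Fin d) (Fin d) ℂ := vecMulVec v (star v) with hVdef
  set Q : Matrix (Fin d) (Fin d) ℂ := Nc • 1 - U - V with hQdef
  set Δ : Matrix (Fin d) (Fin d) ℂ := outerProd a - outerProd b with hΔdef
  -- the key spectral identity
  have idΔ : Nc • Δ = L • U - L • V := by
    rw [hUdef, hVdef, hsu, hsv]
    ext i j
    simp only [hΔdef, hUdef, hVdef, hudef, hvdef, outerProd, Matrix.smul_apply,
      Matrix.sub_apply, Matrix.vecMulVec_apply, hsu, hsv, Pi.smul_apply, Pi.sub_apply,
      Pi.star_apply, smul_eq_mul, hNcL]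
    linear_combination (L * (a i * star (a j) - b i * star (b j))) * hL2 +
      (L * (a i * star (a j) - b i * star (b j))) * hcc
  -- products
  have hUU : U * U = Nc • U := by rw [hUdef, vmv_mul_vmv, huu]
  have hVV : V * V = Nc • V := by rw [hVdef, vmv_mul_vmv, hvv]
  have hUV : U * V = 0 := by
    rw [hUdef, hVdef, vmv_mul_vmv, huv, zero_smul]
  have hVU : V * U = 0 := by
    rw [hUdef, hVdef, vmv_mul_vmv, hvu, zero_smul]
  have hstarNc : star Nc = Nc := by rw [hNcdef]; exact Complex.conj_ofReal N
  have hQH : Qᴴ = Q := by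
    rw [hQdef]
    simp only [Matrix.conjTranspose_sub, Matrix.conjTranspose_smul, Matrix.conjTranspose_one,
      hUdef, hVdef, vmv_herm, hstarNc]
  have hQQ : Q * Q = Nc • Q := by
    rw [hQdef]
    simp only [Matrix.sub_mul, Matrix.mul_sub, Matrix.smul_mul, Matrix.mul_smul,
      Matrix.one_mul, Matrix.mul_one, hUU, hVV, hUV, hVU, smul_sub, smul_smul, sub_zero,
      smul_zero]
    module
  -- trace bookkeeping
  have hminL : Matrix.trace (Δ * ρ₂) = -L := by
    rw [hΔdef, hmin, hLdef]; push_cast; ring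
  set M : Matrix (Fin d) (Fin d) ℂ := Δ + L • 1 with hMdef
  have hMtr : Matrix.trace (M * ρ₂) = 0 := by
    rw [hMdef, Matrix.add_mul, Matrix.trace_add, hminL, Matrix.smul_mul, Matrix.one_mul,
      Matrix.trace_smul, hρ₂.2]
    simp
  have idA : Nc • M = (2 * L) • U + L • Q := by
    rw [hMdef, hQdef, smul_add, idΔ]
    module
  set x : ℂ := Matrix.trace (U * ρ₂) with hxdef
  set y : ℂ := Matrix.trace (Q * ρ₂) with hydef
  have heq : 2 * L * x + L * y = 0 := by
    have h1 := congrArg (fun X => Matrix.trace (X * ρ₂)) idA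
    simpa only [Matrix.smul_mul, Matrix.add_mul, Matrix.trace_add, Matrix.trace_smul,
      smul_eq_mul, hMtr, mul_zero, hxdef, hydef] using h1.symm
  -- x is a nonnegative quadratic form value
  have hxdot : x = star u ⬝ᵥ (ρ₂ *ᵥ u) := by rw [hxdef, hUdef, trace_vmv_mul]
  have hx0 : 0 ≤ x := hxdot ▸ hρ₂.1.dotProduct_mulVec_nonneg u
  -- y is, up to Nc, the squared norm of C * Q where ρ₂ = Cᴴ C
  obtain ⟨C, hC⟩ : ∃ C : Matrix (Fin d) (Fin d) ℂ, ρ₂ = Cᴴ * C := by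
    open scoped MatrixOrder in exact CStarAlgebra.nonneg_iff_eq_star_mul_self.mp hρ₂.1.nonneg
  set s : ℝ := ∑ j, ∑ i, Complex.normSq ((C * Q) i j) with hsdef
  have hs0 : 0 ≤ s :=
    Finset.sum_nonneg fun _ _ => Finset.sum_nonneg fun _ _ => Complex.normSq_nonneg _
  have hNy : Nc * y = (s : ℂ) := by
    have h1 : Nc * y = Matrix.trace ((Q * Q) * ρ₂) := by
      rw [hQQ, Matrix.smul_mul, Matrix.trace_smul, smul_eq_mul, hydef]
    have h2 : (C * Q)ᴴ * (C * Q) = Q * ρ₂ * Q := by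
      rw [Matrix.conjTranspose_mul, hQH, hC]
      simp only [Matrix.mul_assoc]
    have h3 : Matrix.trace ((Q * Q) * ρ₂) = Matrix.trace ((C * Q)ᴴ * (C * Q)) := by
      rw [h2]
      exact (Matrix.trace_mul_cycle Q ρ₂ Q).symm
    rw [h1, h3, trace_conj_self, hsdef]
  -- extract real information
  have hxre : 0 ≤ x.re ∧ 0 = x.im := Complex.nonneg_iff.mp hx0
  have hNyre : N * y.re = s ∧ y.im = 0 := by
    have h1 := congrArg Complex.re hNy
    have h2 := congrArg Complex.im hNy
    rw [hNcdef] at h1 h2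
    simp [Complex.re_ofReal_mul, Complex.im_ofReal_mul] at h1 h2
    exact ⟨h1, h2.resolve_left hNpos.ne'⟩
  have hyre : 0 ≤ y.re := by
    have := hNyre.1
    nlinarith [hs0, hNpos]
  have heqre : 2 * lam * x.re + lam * y.re = 0 := by
    have h1 := congrArg Complex.re heq
    rw [hLdef] at h1
    have h2 : ((2 : ℂ) * (lam : ℂ) * x + (lam : ℂ) * y) =
        (((2 * lam : ℝ)) : ℂ) * x + (((lam : ℝ)) : ℂ) * y := by push_cast; ring
    rw [h2] at h1
    simpa [Complex.add_re, Complex.re_ofReal_mul] using h1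
  have hxre0 : x.re = 0 := by nlinarith [hxre.1, hyre, hlam_pos]
  have hyre0 : y.re = 0 := by nlinarith [hxre.1, hyre, hlam_pos]
  have hs00 : s = 0 := by
    have := hNyre.1
    nlinarith [hNpos]
  -- hence C * Q = 0 and ρ₂ * Q = 0
  have hCQ : C * Q = 0 := by
    ext i j
    have h1 := (Finset.sum_eq_zero_iff_of_nonneg
      (fun j _ => Finset.sum_nonneg fun i _ => Complex.normSq_nonneg ((C * Q) i j))).mp
      (hsdef ▸ hs00) j (Finset.mem_univ j)
    have h2 := (Finset.sum_eq_zero_iff_of_nonneg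
      (fun i _ => Complex.normSq_nonneg ((C * Q) i j))).mp h1 i (Finset.mem_univ i)
    simpa [Complex.normSq_eq_zero] using h2
  have hρQ : ρ₂ * Q = 0 := by rw [hC, Matrix.mul_assoc, hCQ, Matrix.mul_zero]
  -- and ρ₂ *ᵥ u = 0, hence ρ₂ * U = 0
  have hx00 : x = 0 := by
    apply Complex.ext
    · exact hxre0
    · exact hxre.2.symm
  have hρu : ρ₂ *ᵥ u = 0 := (hρ₂.1.dotProduct_mulVec_zero_iff u).mp (hxdot ▸ hx00)
  have hρU : ρ₂ * U = 0 := by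
    rw [hUdef, mul_vmv, hρu]
    ext i j
    simp [Matrix.vecMulVec_apply]
  -- ρ₂ is supported on v
  have hρV : Nc • ρ₂ = ρ₂ * V := by
    have h1 : Nc • ρ₂ - ρ₂ * U - ρ₂ * V = ρ₂ * Q := by
      rw [hQdef, Matrix.mul_sub, Matrix.mul_sub, Matrix.mul_smul, Matrix.mul_one]
    rw [hρQ, hρU, sub_zero] at h1
    exact sub_eq_zero.mp h1
  have hρH : ρ₂ᴴ = ρ₂ := hρ₂.1.1
  have hVH : Vᴴ = V := by rw [hVdef]; exact vmv_herm v
  have hVρ : Nc • ρ₂ = V * ρ₂ := by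
    have h1 := congrArg Matrix.conjTranspose hρV
    rwa [Matrix.conjTranspose_smul, Matrix.conjTranspose_mul, hρH, hVH, hstarNc] at h1
  -- compute `V ρ₂ V = t • V` and identify `t`
  set t : ℂ := star v ⬝ᵥ (ρ₂ *ᵥ v) with htdef
  have hVρV : (Nc * Nc) • ρ₂ = t • V := by
    calc (Nc * Nc) • ρ₂ = Nc • (Nc • ρ₂) := by rw [smul_smul]
    _ = Nc • (ρ₂ * V) := by rw [hρV]
    _ = (Nc • ρ₂) * V := by rw [Matrix.smul_mul]
    _ = V * ρ₂ * V := by rw [hVρ]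
    _ = V * (ρ₂ * V) := by rw [Matrix.mul_assoc]
    _ = V * vecMulVec (ρ₂ *ᵥ v) (star v) := by rw [hVdef, mul_vmv]
    _ = (star v ⬝ᵥ (ρ₂ *ᵥ v)) • vecMulVec v (star v) := by rw [hVdef, vmv_mul_vmv]
    _ = t • V := by rw [htdef, hVdef]
  have htr : t = Nc := by
    have h1 := congrArg Matrix.trace hVρV
    rw [Matrix.trace_smul, Matrix.trace_smul, hρ₂.2, hVdef, trace_vmv_s14, hvv, smul_eq_mul,
      smul_eq_mul, mul_one] at h1
    exact mul_right_cancel₀ hNc0 h1.symm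
  have hfin : Nc • ρ₂ = V := by
    have h1 : (Nc * Nc) • ρ₂ = Nc • V := by rw [hVρV, htr]
    have h2 : Nc • (Nc • ρ₂) = Nc • V := by rwa [smul_smul]
    exact smul_right_injective _ hNc0 h2
  -- final inequality (real)
  have hlam1 : lam ≤ 1 := by nlinarith [hlam2, hFnn]
  have hineq : 1 - F / 2 ≤ (1 + lam) / 2 := by nlinarith [hlam2, hlam_pos, hlam1]
  -- conclusions
  have hnegL : ((-lam : ℝ) : ℂ) = -L := by rw [hLdef]; push_cast; ring
  refine ⟨?_, ?_, ?_, hineq⟩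
  · -- ρ₂ is idempotent
    apply smul_right_injective (Matrix (Fin d) (Fin d) ℂ) (mul_ne_zero hNc0 hNc0)
    calc (Nc * Nc) • (ρ₂ * ρ₂) = (Nc • ρ₂) * (Nc • ρ₂) := by
          rw [Matrix.smul_mul, Matrix.mul_smul, smul_smul]
    _ = V * V := by rw [hfin]
    _ = Nc • V := hVV
    _ = Nc • (Nc • ρ₂) := by rw [hfin]
    _ = (Nc * Nc) • ρ₂ := by rw [smul_smul]
  · -- eigenvector equation
    have hΔv : Δ *ᵥ v = (-L) • v := by
      rw [hΔdef, Matrix.sub_mulVec, outerProd, outerProd, vmv_mulVec, vmv_mulVec, hav, hbv,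
        hvdef]
      funext i
      simp only [Pi.smul_apply, Pi.sub_apply, smul_eq_mul]
      ring
    have hΔV : Δ * V = (-L) • V := by
      rw [hVdef, mul_vmv, hΔv, smul_vmv]
    rw [hnegL]
    apply smul_right_injective (Matrix (Fin d) (Fin d) ℂ) hNc0
    calc Nc • (Δ * ρ₂) = Δ * (Nc • ρ₂) := by rw [Matrix.mul_smul]
    _ = Δ * V := by rw [hfin]
    _ = (-L) • V := hΔV
    _ = (-L) • (Nc • ρ₂) := by rw [hfin]
    _ = Nc • ((-L) • ρ₂) := by rw [smul_smul, smul_smul, mul_comm]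
  · -- the fidelity value
    have hbVtr : Matrix.trace (outerProd b * V) = L ^ 2 * (1 + L) ^ 2 := by
      rw [outerProd, hVdef, vmv_mul_vmv, Matrix.trace_smul, trace_vmv_s14, hvb, hbv, smul_eq_mul]
      ring
    apply mul_left_cancel₀ hNc0
    have h1 : Nc * Matrix.trace (outerProd b * ρ₂) = Matrix.trace (outerProd b * V) := by
      rw [← hfin, Matrix.mul_smul, Matrix.trace_smul, smul_eq_mul]
    rw [h1, hbVtr, hLdef, hNcdef, hNdef]
    push_cast
    ring
end
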